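/- The real symmetric 3×3 matrix M with rows ( (−3+√17)/4, (1/2)·√((7−√17)/2), −√((−3+√17)/2) ), ( (1/2)·√((7−√17)/2), 1/2, (1/2)·√((−1+√17)/2) ), ( −√((−3+√17)/2), (1/2)·√((−1+√17)/2), (5−√17)/4 ) is orthogonal, i.e. Mᵀ·M is the identity matrix. (This is the block of the vertical gauge transformation between the connections ραk and αραk for AH+1 with columns f·c̃₁·c·2, f·c̃₂·c·2, f·ã·a·2, from Appendix A of the paper.) -/
import Mathlib

set_option maxHeartbeats 1000000

open Matrix

/-- The (symmetric) block of the vertical gauge transformation between ραk and αραk for AH+1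
with columns f·c̃₁·c·2, f·c̃₂·c·2, f·ã·a·2. -/
noncomputable def M : Matrix (Fin 3) (Fin 3) ℝ :=
  !![(-3 + Real.sqrt 17) / 4, (1 / 2) * Real.sqrt ((7 - Real.sqrt 17) / 2),
       -(Real.sqrt ((-3 + Real.sqrt 17) / 2));
     (1 / 2) * Real.sqrt ((7 - Real.sqrt 17) / 2), 1 / 2,
       (1 / 2) * Real.sqrt ((-1 + Real.sqrt 17) / 2);
     -(Real.sqrt ((-3 + Real.sqrt 17) / 2)), (1 / 2) * Real.sqrt ((-1 + Real.sqrt 17) / 2),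
       (5 - Real.sqrt 17) / 4]

lemma eq_of_sq {x y : ℝ} (hx : 0 ≤ x) (hy : 0 ≤ y) (h : x ^ 2 = y ^ 2) : x = y := by
  have h' := Real.sqrt_sq hx
  rw [← h', h, Real.sqrt_sq hy]

lemma key (s a b c : ℝ) (ha0 : 0 ≤ a) (hb0 : 0 ≤ b) (hc0 : 0 ≤ c)
    (h17 : s ^ 2 = 17) (hs4 : 4 < s) (hs5 : s < 5)
    (ha2 : a ^ 2 = (7 - s) / 2) (hb2 : b ^ 2 = (-3 + s) / 2) (hc2 : c ^ 2 = (-1 + s) / 2) :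
    (!![(-3 + s) / 4, (1 / 2) * a, -b;
        (1 / 2) * a, 1 / 2, (1 / 2) * c;
        -b, (1 / 2) * c, (5 - s) / 4] : Matrix (Fin 3) (Fin 3) ℝ)ᵀ *
      !![(-3 + s) / 4, (1 / 2) * a, -b;
        (1 / 2) * a, 1 / 2, (1 / 2) * c;
        -b, (1 / 2) * c, (5 - s) / 4] = 1 := by
  have hbc : 4 * (b * c) = (s - 1) * a := by
    apply eq_of_sq (by positivity) (by nlinarith)
    have h1 : (4 * (b * c)) ^ 2 = 16 * b ^ 2 * c ^ 2 := by ring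
    have h2 : ((s - 1) * a) ^ 2 = (s - 1) ^ 2 * a ^ 2 := by ring
    rw [h1, h2, ha2, hb2, hc2]; nlinarith
  have hac : a * c = 2 * b := by
    apply eq_of_sq (by positivity) (by positivity)
    have h1 : (a * c) ^ 2 = a ^ 2 * c ^ 2 := by ring
    have h2 : (2 * b) ^ 2 = 4 * b ^ 2 := by ring
    rw [h1, h2, ha2, hb2, hc2]; nlinarith
  have hab : 4 * (a * b) = (7 - s) * c := by
    apply eq_of_sq (by positivity) (by nlinarith)
    have h1 : (4 * (a * b)) ^ 2 = 16 * a ^ 2 * b ^ 2 := by ring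
    have h2 : ((7 - s) * c) ^ 2 = (7 - s) ^ 2 * c ^ 2 := by ring
    rw [h1, h2, ha2, hb2, hc2]; nlinarith
  have hsym : (!![(-3 + s) / 4, (1 / 2) * a, -b;
        (1 / 2) * a, 1 / 2, (1 / 2) * c;
        -b, (1 / 2) * c, (5 - s) / 4] : Matrix (Fin 3) (Fin 3) ℝ)ᵀ =
      !![(-3 + s) / 4, (1 / 2) * a, -b;
        (1 / 2) * a, 1 / 2, (1 / 2) * c;
        -b, (1 / 2) * c, (5 - s) / 4] := by
    ext i j
    fin_cases i <;> fin_cases j <;> simp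
  rw [hsym, Matrix.mul_fin_three, Matrix.one_fin_three]
  ext i j
  fin_cases i <;> fin_cases j <;> simp [Matrix.vecHead, Matrix.vecTail] <;>
    nlinarith [ha2, hb2, hc2, hbc, hac, hab, h17]

/-- This block of the vertical gauge transformation is orthogonal. -/
theorem stmt_17 : Mᵀ * M = (1 : Matrix (Fin 3) (Fin 3) ℝ) := by
  have h17 : Real.sqrt 17 ^ 2 = 17 := Real.sq_sqrt (by norm_num)
  have hs4 : 4 < Real.sqrt 17 := by
    have h : Real.sqrt 16 < Real.sqrt 17 := Real.sqrt_lt_sqrt (by norm_num) (by norm_num)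
    have h16 : Real.sqrt 16 = 4 := by
      rw [show (16:ℝ) = 4 ^ 2 by norm_num, Real.sqrt_sq]; norm_num
    linarith [h16 ▸ h]
  have hs5 : Real.sqrt 17 < 5 := by
    have h : Real.sqrt 17 < Real.sqrt 25 := Real.sqrt_lt_sqrt (by norm_num) (by norm_num)
    have h25 : Real.sqrt 25 = 5 := by
      rw [show (25:ℝ) = 5 ^ 2 by norm_num, Real.sqrt_sq]; norm_num
    linarith [h25 ▸ h]
  have := key (Real.sqrt 17) (Real.sqrt ((7 - Real.sqrt 17) / 2))
    (Real.sqrt ((-3 + Real.sqrt 17) / 2)) (Real.sqrt ((-1 + Real.sqrt 17) / 2))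
    (Real.sqrt_nonneg _) (Real.sqrt_nonneg _) (Real.sqrt_nonneg _)
    h17 hs4 hs5
    (Real.sq_sqrt (by linarith)) (Real.sq_sqrt (by linarith)) (Real.sq_sqrt (by linarith))
  simpa [M] using this
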